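/- Let γ ∈ (0,1) and let D′ be a digraph on at most n vertices containing a family F of f pairwise vertex-disjoint absorbing 4-paths with f ≥ γ²n and |F| ≤ γn, such that for every ordered vertex pair (u, v) of D′ one has |A_{uv} ∩ F| ≥ γ²n. Then for any real β > 0 and any integer l with βf < l < (1 − β)f, and n sufficiently large, there exists a partition F = F_1 ∪ F_2 with |F_1| = l and |F_2| = f − l such that for every ordered vertex pair (u, v) of D′ − V(F), both F_1 and F_2 contain an absorber for (u, v). -/

import Mathlib

open scoped Classical

/-- The list of vertices of a quadruple. -/
def quadList {V : Type*} (z : V × V × V × V) : List V := [z.1, z.2.1, z.2.2.1, z.2.2.2]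

/-- `z` records a 4-path `z₁z₂z₃z₄` of the digraph `A`. -/
def IsFourPath {V : Type*} (A : V → V → Prop) (z : V × V × V × V) : Prop :=
  (quadList z).Nodup ∧ (quadList z).Chain' A

/-- The 4-path `z = z₁z₂z₃z₄` absorbs the ordered pair `(u, v)`: `z₂u` and `vz₃` are arcs. -/
def AbsorbsPair {V : Type*} (A : V → V → Prop) (z : V × V × V × V) (u v : V) : Prop :=
  A z.2.1 u ∧ A v z.2.2.1

/-!
Greedy covering. Each pair `(u, v)` has at least `γ²n` absorbers among the at most `γn` paths
of `F`, more than a `γ/2`-fraction of them, and this survives the removal of fewer than `γ²n/2`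
paths. By averaging, some path absorbs a `γ/2`-fraction of any set of pairs, so `k` greedily
chosen paths leave at most `(1 - γ/2)^k n² < 1` pairs unabsorbed, for some `k < min(β, 1/2) γ² n`
once `n` is large. Doing this twice gives disjoint sets `T₁, T₂` of at most `k ≤ l, f - l`
paths, each absorbing every pair; then take `T₁ ⊆ F₁ ⊆ F \ T₂` with `|F₁| = l`.
-/

open Finset Filter

section Greedy

variable {α ι : Type*} [DecidableEq α] {G : Finset α} {I : Finset ι} {S : ι → Finset α} {δ : ℝ}

lemma exists_card_le_one_card_filter_disjoint_le
    (hS : ∀ i ∈ I, S i ⊆ G) (hcard : ∀ i ∈ I, δ * #G < #(S i)) :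
    ∃ T ⊆ G, #T ≤ 1 ∧ (#{i ∈ I | Disjoint (S i) T} : ℝ) ≤ (1 - δ) * #I := by
  rcases I.eq_empty_or_nonempty with rfl | hI
  · exact ⟨∅, empty_subset _, by simp, by simp⟩
  have hdouble : ∑ i ∈ I, #(S i) = ∑ x ∈ G, #{i ∈ I | x ∈ S i} :=
    calc ∑ i ∈ I, #(S i) = ∑ i ∈ I, #(G.bipartiteAbove (fun i x => x ∈ S i) i) :=
          sum_congr rfl fun i hi => by
            rw [bipartiteAbove, filter_mem_eq_inter, inter_eq_right.2 (hS i hi)]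
      _ = _ := sum_card_bipartiteAbove_eq_sum_card_bipartiteBelow _
  have hsum : ∑ _x ∈ G, δ * (#I : ℝ) < ∑ x ∈ G, (#{i ∈ I | x ∈ S i} : ℝ) :=
    calc ∑ _x ∈ G, δ * (#I : ℝ) = ∑ _i ∈ I, δ * (#G : ℝ) := by
          simp only [sum_const, nsmul_eq_mul]; ring
      _ < ∑ i ∈ I, (#(S i) : ℝ) := sum_lt_sum_of_nonempty hI hcard
      _ = _ := by exact_mod_cast hdouble
  obtain ⟨x, hxG, hx⟩ := exists_lt_of_sum_lt hsum
  refine ⟨{x}, singleton_subset_iff.2 hxG, (card_singleton x).le, ?_⟩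
  have hsplit : (#{i ∈ I | x ∈ S i} : ℝ) + #{i ∈ I | x ∉ S i} = #I := by
    exact_mod_cast card_filter_add_card_filter_not _
  simp only [disjoint_singleton_right]
  linarith

lemma exists_card_le_card_filter_disjoint_le_pow (hδ : δ ≤ 1)
    (hS : ∀ i ∈ I, S i ⊆ G) (hcard : ∀ i ∈ I, δ * #G < #(S i)) (k : ℕ) :
    ∃ T ⊆ G, #T ≤ k ∧ (#{i ∈ I | Disjoint (S i) T} : ℝ) ≤ (1 - δ) ^ k * #I := by
  induction k generalizing I with
  | zero => exact ⟨∅, empty_subset _, le_rfl, by simp⟩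
  | succ k ih =>
    obtain ⟨T₀, hT₀G, hT₀, hmiss₀⟩ := exists_card_le_one_card_filter_disjoint_le hS hcard
    obtain ⟨T, hTG, hT, hmiss⟩ := ih (I := {i ∈ I | Disjoint (S i) T₀})
      (fun i hi => hS i (mem_filter.1 hi).1) (fun i hi => hcard i (mem_filter.1 hi).1)
    refine ⟨T₀ ∪ T, union_subset hT₀G hTG, (card_union_le _ _).trans (by omega), ?_⟩
    simp only [disjoint_union_right, ← filter_filter]
    calc _ ≤ (1 - δ) ^ k * #{i ∈ I | Disjoint (S i) T₀} := hmiss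
      _ ≤ (1 - δ) ^ k * ((1 - δ) * #I) :=
          mul_le_mul_of_nonneg_left hmiss₀ (pow_nonneg (by linarith) k)
      _ = (1 - δ) ^ (k + 1) * #I := by ring

lemma exists_card_le_forall_not_disjoint (hδ : δ ≤ 1)
    (hS : ∀ i ∈ I, S i ⊆ G) (hcard : ∀ i ∈ I, δ * #G < #(S i)) {k : ℕ}
    (hbound : (1 - δ) ^ k * #I < 1) :
    ∃ T ⊆ G, #T ≤ k ∧ ∀ i ∈ I, ¬Disjoint (S i) T := by
  obtain ⟨T, hTG, hT, hmiss⟩ := exists_card_le_card_filter_disjoint_le_pow hδ hS hcard k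
  have hnone : #{i ∈ I | Disjoint (S i) T} = 0 := by
    exact_mod_cast Nat.lt_one_iff.1 (by exact_mod_cast hmiss.trans_lt hbound)
  rw [card_eq_zero, filter_eq_empty_iff] at hnone
  exact ⟨T, hTG, hT, hnone⟩

lemma exists_subset_card_eq_forall_not_disjoint_and_sdiff (hδ₀ : 0 ≤ δ) (hδ₁ : δ ≤ 1)
    (hS : ∀ i ∈ I, S i ⊆ G) {k l : ℕ} (hcard : ∀ i ∈ I, δ * #G + k < #(S i))
    (hbound : (1 - δ) ^ k * #I < 1) (hkl : k ≤ l) (hlG : l + k ≤ #G) :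
    ∃ G₁ ⊆ G, #G₁ = l ∧ ∀ i ∈ I, ¬Disjoint (S i) G₁ ∧ ¬Disjoint (S i) (G \ G₁) := by
  obtain ⟨T₁, hT₁G, hT₁, hit₁⟩ := exists_card_le_forall_not_disjoint hδ₁ hS
    (fun i hi => by linarith [hcard i hi, (Nat.cast_nonneg k : (0 : ℝ) ≤ k)]) hbound
  -- each `S i` loses at most `k` elements to `T₁`: this is what the `+ k` in `hcard` pays for
  have hcard₂ : ∀ i ∈ I, δ * #(G \ T₁) < #(S i \ T₁) := by
    intro i hi
    have hSi : (#(S i) : ℝ) ≤ #(S i \ T₁) + #T₁ := by exact_mod_cast card_le_card_sdiff_add_card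
    have hG : δ * #(G \ T₁) ≤ δ * #G :=
      mul_le_mul_of_nonneg_left (by exact_mod_cast card_le_card sdiff_subset) hδ₀
    have hT₁k : (#T₁ : ℝ) ≤ k := by exact_mod_cast hT₁
    linarith [hcard i hi]
  obtain ⟨T₂, hT₂G, hT₂, hit₂⟩ := exists_card_le_forall_not_disjoint hδ₁
    (fun i hi => sdiff_subset_sdiff (hS i hi) le_rfl) hcard₂ hbound
  have hT₁T₂ : T₁ ⊆ G \ T₂ := fun x hx =>
    mem_sdiff.2 ⟨hT₁G hx, fun h => (mem_sdiff.1 (hT₂G h)).2 hx⟩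
  obtain ⟨G₁, hT₁G₁, hG₁, hG₁l⟩ := exists_subsuperset_card_eq hT₁T₂ (hT₁.trans hkl)
    (by rw [card_sdiff_of_subset (hT₂G.trans sdiff_subset)]; omega)
  have hT₂G₁ : T₂ ⊆ G \ G₁ := fun x hx =>
    mem_sdiff.2 ⟨(hT₂G.trans sdiff_subset) hx, fun h => (mem_sdiff.1 (hG₁ h)).2 hx⟩
  refine ⟨G₁, hG₁.trans sdiff_subset, hG₁l, fun i hi => ⟨?_, ?_⟩⟩
  · exact fun h => hit₁ i hi (h.mono_right hT₁G₁)
  · exact fun h => hit₂ i hi ((h.mono_left sdiff_subset).mono_right hT₂G₁)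

end Greedy

lemma Set.Finite.exists_partition_hitting_all {α ι : Type*} [Fintype ι] {F : Set α}
    (hF : F.Finite) {P : ι → α → Prop} {δ : ℝ} {k l : ℕ} (hδ₀ : 0 ≤ δ) (hδ₁ : δ ≤ 1)
    (hcard : ∀ i, δ * F.ncard + k < {z ∈ F | P i z}.ncard)
    (hbound : (1 - δ) ^ k * Fintype.card ι < 1) (hkl : k ≤ l) (hlF : l + k ≤ F.ncard) :
    ∃ F₁ F₂ : Set α, F₁ ∪ F₂ = F ∧ Disjoint F₁ F₂ ∧ F₁.ncard = l ∧ F₂.ncard = F.ncard - l ∧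
      ∀ i, (∃ z ∈ F₁, P i z) ∧ (∃ z ∈ F₂, P i z) := by
  classical
  have hsep : ∀ i, {z ∈ F | P i z}.ncard = #{z ∈ hF.toFinset | P i z} := fun i => by
    rw [Set.ncard_eq_toFinset_card _ (hF.subset (Set.sep_subset _ _))]
    congr 1
    ext z
    simp
  rw [Set.ncard_eq_toFinset_card F hF] at hcard hlF ⊢
  obtain ⟨F₁, hF₁F, hF₁, hhit⟩ := exists_subset_card_eq_forall_not_disjoint_and_sdiff
    (I := Finset.univ) (S := fun i => {z ∈ hF.toFinset | P i z}) hδ₀ hδ₁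
    (fun _ _ => filter_subset _ _) (fun i _ => hsep i ▸ hcard i) (by rwa [Finset.card_univ]) hkl hlF
  refine ⟨F₁, ↑(hF.toFinset \ F₁), ?_, disjoint_coe.2 disjoint_sdiff, by simpa using hF₁, ?_,
    fun i => ?_⟩
  · rw [← coe_union, union_sdiff_of_subset hF₁F, hF.coe_toFinset]
  · rw [Set.ncard_coe_finset, card_sdiff_of_subset hF₁F, hF₁]
  · obtain ⟨h₁, h₂⟩ := hhit i (Finset.mem_univ i)
    obtain ⟨z₁, hz₁, hz₁F₁⟩ := Finset.not_disjoint_iff.1 h₁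
    obtain ⟨z₂, hz₂, hz₂F₂⟩ := Finset.not_disjoint_iff.1 h₂
    exact ⟨⟨z₁, hz₁F₁, (mem_filter.1 hz₁).2⟩, ⟨z₂, hz₂F₂, (mem_filter.1 hz₂).2⟩⟩

lemma eventually_exists_lt_mul_and_sq_mul_pow_lt_one {ρ ε : ℝ} (hρ₀ : 0 < ρ) (hρ₁ : ρ < 1)
    (hε : 0 < ε) : ∀ᶠ n : ℕ in atTop, ∃ k : ℕ, (k : ℝ) < ε * n ∧ (n : ℝ) ^ 2 * ρ ^ k < 1 := by
  have hc : 0 < ε / 2 := half_pos hε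
  have hq : |ρ ^ (ε / 2)| < 1 := by
    rw [abs_of_pos (Real.rpow_pos_of_pos hρ₀ _)]
    exact Real.rpow_lt_one hρ₀.le hρ₁ hc
  filter_upwards [(tendsto_pow_const_mul_const_pow_of_abs_lt_one 2 hq).eventually
      (gt_mem_nhds one_pos),
    (tendsto_natCast_atTop_atTop.const_mul_atTop hc).eventually_ge_atTop 1] with n hn hcn
  refine ⟨⌈ε / 2 * n⌉₊, ?_, ?_⟩
  · linarith [Nat.ceil_lt_two_mul (show (2⁻¹ : ℝ) < ε / 2 * n by linarith)]
  · calc (n : ℝ) ^ 2 * ρ ^ ⌈ε / 2 * n⌉₊ ≤ n ^ 2 * (ρ ^ (ε / 2)) ^ n := by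
          gcongr
          rw [← Real.rpow_natCast, ← Real.rpow_natCast, ← Real.rpow_mul hρ₀.le]
          exact Real.rpow_le_rpow_of_exponent_ge hρ₀ hρ₁.le (Nat.le_ceil _)
      _ < 1 := hn

/-- **Lemma (splitting an absorbing family).**  Let `D'` be a digraph on at most `n`
vertices containing a family `F` of `f` pairwise vertex-disjoint absorbing 4-paths with
`γ²n ≤ f` and `|F| ≤ γn`, such that every ordered vertex pair `(u, v)` of `D'` has at
least `γ²n` absorbers in `F`.  Then for any `β > 0` and any integer `l` with
`βf < l < (1-β)f`, and `n` sufficiently large, `F` can be split as `F = F₁ ∪ F₂` with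
`|F₁| = l`, `|F₂| = f - l`, so that every ordered pair `(u, v)` of vertices of
`D' - V(F)` has an absorber in each of `F₁` and `F₂`. -/
theorem absorbing_family_partition (γ β : ℝ) (hγ0 : 0 < γ) (hγ1 : γ < 1) (hβ : 0 < β) :
    ∃ n₀ : ℕ, ∀ n : ℕ, n₀ ≤ n →
      ∀ (V : Type) [Fintype V] (A : V → V → Prop),
        Fintype.card V ≤ n →
        ∀ F : Set (V × V × V × V),
          (∀ z ∈ F, IsFourPath A z) →
          (∀ z ∈ F, ∀ z' ∈ F, z ≠ z' → ∀ x ∈ quadList z, x ∉ quadList z') →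
          γ^2 * n ≤ (F.ncard : ℝ) →
          (F.ncard : ℝ) ≤ γ * n →
          (∀ u v : V, γ^2 * n ≤ (({z ∈ F | AbsorbsPair A z u v}).ncard : ℝ)) →
          ∀ l : ℕ, β * F.ncard < (l : ℝ) → (l : ℝ) < (1 - β) * F.ncard →
            ∃ F₁ F₂ : Set (V × V × V × V),
              F₁ ∪ F₂ = F ∧ Disjoint F₁ F₂ ∧
              F₁.ncard = l ∧ F₂.ncard = F.ncard - l ∧
              ∀ u v : V,
                (∀ z ∈ F, u ∉ quadList z) → (∀ z ∈ F, v ∉ quadList z) →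
                (∃ z ∈ F₁, AbsorbsPair A z u v) ∧ (∃ z ∈ F₂, AbsorbsPair A z u v) := by
  have hβ' : 0 < min β (1 / 2) := lt_min hβ one_half_pos
  obtain ⟨n₀, hn₀⟩ := eventually_atTop.1 <| eventually_exists_lt_mul_and_sq_mul_pow_lt_one
    (ρ := 1 - γ / 2) (ε := min β (1 / 2) * γ ^ 2) (by linarith) (by linarith) (by positivity)
  refine ⟨n₀, fun n hn V _ A hV F _ _ hFlow hFup habs l hl₁ hl₂ => ?_⟩
  obtain ⟨k, hk, hpow⟩ := hn₀ n hn
  have hcard (p : V × V) :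
      γ / 2 * F.ncard + k < {z ∈ F | AbsorbsPair A z p.1 p.2}.ncard := by
    have : γ / 2 * F.ncard ≤ γ / 2 * (γ * n) := by gcongr
    have : min β (1 / 2) * γ ^ 2 * n ≤ 1 / 2 * γ ^ 2 * n := by gcongr; exact min_le_right _ _
    linarith [habs p.1 p.2]
  have hbound : (1 - γ / 2) ^ k * Fintype.card (V × V) < 1 := by
    have : (Fintype.card (V × V) : ℝ) ≤ n ^ 2 := by
      rw [Fintype.card_prod, ← sq]; exact_mod_cast Nat.pow_le_pow_left hV 2
    calc (1 - γ / 2) ^ k * Fintype.card (V × V) ≤ (1 - γ / 2) ^ k * n ^ 2 :=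
          mul_le_mul_of_nonneg_left this (pow_nonneg (by linarith) k)
      _ < 1 := by linarith
  have hkF : (k : ℝ) < β * F.ncard :=
    calc (k : ℝ) < min β (1 / 2) * γ ^ 2 * n := hk
      _ ≤ β * (γ ^ 2 * n) := by rw [mul_assoc]; gcongr; exact min_le_left _ _
      _ ≤ β * F.ncard := by gcongr
  have hkl : k ≤ l := by exact_mod_cast (show (k : ℝ) ≤ l by linarith)
  have hlF : l + k ≤ F.ncard := by exact_mod_cast (show (l + k : ℝ) ≤ F.ncard by linarith)
  obtain ⟨F₁, F₂, hunion, hdisj, hF₁, hF₂, hhit⟩ := F.toFinite.exists_partition_hitting_all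
    (P := fun (p : V × V) z => AbsorbsPair A z p.1 p.2) (by positivity) (by linarith)
    hcard hbound hkl hlF
  exact ⟨F₁, F₂, hunion, hdisj, hF₁, hF₂, fun u v _ _ => hhit (u, v)⟩
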